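/- Let G be a finite simple graph and v a vertex of G such that deg_G(v) > deg_G(u) for every u ∈ N_G(v). If S is a strong dominating set of the vertex-deleted graph G − v, then S ∪ {v} is a strong dominating set of G; consequently γst(G) ≤ γst(G − v) + 1. -/

import Mathlib

/-- The degree of a vertex `x` in a graph `G`. -/
noncomputable def sdeg {V : Type*} (G : SimpleGraph V) (x : V) : ℕ :=
  (G.neighborSet x).ncard

/-- `D` is a strong dominating set of `G`: every vertex `x ∉ D` has a neighbor
`y ∈ D` with `deg x ≤ deg y`. -/
def IsStrongDominating {V : Type*} (G : SimpleGraph V) (D : Set V) : Prop :=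
  ∀ x ∉ D, ∃ y ∈ D, G.Adj x y ∧ sdeg G x ≤ sdeg G y

/-- The strong domination number of `G`. -/
noncomputable def sdn {V : Type*} (G : SimpleGraph V) : ℕ :=
  sInf {n | ∃ D : Set V, IsStrongDominating G D ∧ D.ncard = n}

/-- Vertex deletion `G - v`: the induced subgraph on the complement of `{v}`. -/
def delVtx {V : Type*} (G : SimpleGraph V) (v : V) : SimpleGraph {x : V // x ≠ v} where
  Adj a b := G.Adj a.1 b.1
  symm := ⟨fun a b h => G.symm.symm _ _ h⟩
  loopless := ⟨fun a h => G.loopless.irrefl a.1 h⟩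

/-- Vertex contraction `G / v`: delete `v` and put a clique on its open neighborhood. -/
def contractVtx {V : Type*} (G : SimpleGraph V) (v : V) : SimpleGraph {x : V // x ≠ v} where
  Adj a b := a ≠ b ∧ (G.Adj a.1 b.1 ∨ (G.Adj v a.1 ∧ G.Adj v b.1))
  symm := by
    constructor
    rintro a b ⟨hab, h | ⟨ha, hb⟩⟩
    · exact ⟨hab.symm, Or.inl h.symm⟩
    · exact ⟨hab.symm, Or.inr ⟨hb, ha⟩⟩
  loopless := by constructor; rintro a ⟨h, -⟩; exact h rfl

/-- `G ⊙ v`: remove all edges between any pair of neighbors of `v`. -/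
def odotVtx {V : Type*} (G : SimpleGraph V) (v : V) : SimpleGraph V where
  Adj x y := G.Adj x y ∧ ¬(G.Adj v x ∧ G.Adj v y)
  symm := by
    constructor
    rintro x y ⟨h, hn⟩
    exact ⟨h.symm, fun hc => hn ⟨hc.2, hc.1⟩⟩
  loopless := by constructor; rintro x ⟨h, -⟩; exact G.loopless.irrefl x h

/-- Edge contraction `G / uv`: merge `v` into `u`. -/
def contractEdge {V : Type*} (G : SimpleGraph V) (u v : V) : SimpleGraph {x : V // x ≠ v} where
  Adj a b := a ≠ b ∧ (G.Adj a.1 b.1 ∨ (a.1 = u ∧ G.Adj v b.1) ∨ (b.1 = u ∧ G.Adj v a.1))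
  symm := by
    constructor
    rintro a b ⟨hab, h | h | h⟩
    · exact ⟨hab.symm, Or.inl h.symm⟩
    · exact ⟨hab.symm, Or.inr (Or.inr h)⟩
    · exact ⟨hab.symm, Or.inr (Or.inl h)⟩
  loopless := by constructor; rintro a ⟨h, -⟩; exact h rfl

/-- The star `K_{1,n}` with center `none` and leaves `some i`. -/
def starG (n : ℕ) : SimpleGraph (Option (Fin n)) where
  Adj a b := (a = none ∧ b ≠ none) ∨ (a ≠ none ∧ b = none)
  symm := by
    constructor
    rintro a b (⟨h1, h2⟩ | ⟨h1, h2⟩)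
    · exact Or.inr ⟨h2, h1⟩
    · exact Or.inl ⟨h2, h1⟩
  loopless := by
    constructor
    rintro a (⟨h1, h2⟩ | ⟨h1, h2⟩)
    exacts [h2 h1, h1 h2]

/-- The path graph `P_n` on vertices `0, …, n-1`, consecutive integers adjacent. -/
def pathG (n : ℕ) : SimpleGraph (Fin n) where
  Adj i j := i.1 + 1 = j.1 ∨ j.1 + 1 = i.1
  symm := ⟨fun i j h => h.symm⟩
  loopless := by constructor; rintro i (h | h) <;> omega

/-! Deleting `v` lowers the degrees of the neighbours of `v` and leaves every other degree
unchanged. So a vertex `x ∉ S ∪ {v}` is either a neighbour of `v`, strongly dominated by `v`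
since `deg v` exceeds all degrees around it, or it keeps its degree in `G − v` and is strongly
dominated by its dominator `y ∈ S`, whose degree in `G` is at least its degree in `G − v`. -/

namespace SimpleGraph

variable {V : Type*} (G : SimpleGraph V) (v : V)

lemma image_val_neighborSet_delVtx (x : {x : V // x ≠ v}) :
    Subtype.val '' (delVtx G v).neighborSet x = G.neighborSet x.1 \ {v} := by
  ext y
  constructor
  · rintro ⟨z, hz, rfl⟩
    exact ⟨hz, z.2⟩
  · rintro ⟨hy, hyv⟩
    exact ⟨⟨y, hyv⟩, hy, rfl⟩

lemma sdeg_delVtx (x : {x : V // x ≠ v}) :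
    sdeg (delVtx G v) x = (G.neighborSet x.1 \ {v}).ncard := by
  rw [← image_val_neighborSet_delVtx, Set.ncard_image_of_injective _ Subtype.val_injective, sdeg]

lemma sdeg_delVtx_le (x : {x : V // x ≠ v}) : sdeg (delVtx G v) x ≤ sdeg G x.1 := by
  rw [sdeg_delVtx]
  exact Set.ncard_sdiff_singleton_le _ _

lemma sdeg_delVtx_of_not_adj (x : {x : V // x ≠ v}) (hx : ¬G.Adj v x.1) :
    sdeg (delVtx G v) x = sdeg G x.1 := by
  rw [sdeg_delVtx, Set.sdiff_singleton_eq_self (s := G.neighborSet x.1) fun h ↦ hx h.symm, sdeg]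

end SimpleGraph

open SimpleGraph

lemma IsStrongDominating.image_val_union_singleton_of_delVtx {V : Type*} {G : SimpleGraph V}
    {v : V} (hv : ∀ u ∈ G.neighborSet v, sdeg G u < sdeg G v) {S : Set {x : V // x ≠ v}}
    (hS : IsStrongDominating (delVtx G v) S) :
    IsStrongDominating G (Subtype.val '' S ∪ {v}) := by
  intro x hx
  have hxv : x ≠ v := fun h ↦ hx (Or.inr h)
  by_cases hadj : G.Adj v x
  · exact ⟨v, Or.inr rfl, hadj.symm, (hv x hadj).le⟩
  obtain ⟨y, hyS, hxy, hdeg⟩ := hS ⟨x, hxv⟩ fun h ↦ hx (Or.inl ⟨_, h, rfl⟩)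
  refine ⟨y, Or.inl ⟨y, hyS, rfl⟩, hxy, ?_⟩
  calc sdeg G x = sdeg (delVtx G v) ⟨x, hxv⟩ :=
        (sdeg_delVtx_of_not_adj G v ⟨x, hxv⟩ hadj).symm
    _ ≤ sdeg (delVtx G v) y := hdeg
    _ ≤ sdeg G y := sdeg_delVtx_le G v y

lemma isStrongDominating_univ {V : Type*} (G : SimpleGraph V) :
    IsStrongDominating G Set.univ :=
  fun x hx ↦ absurd (Set.mem_univ x) hx

lemma exists_isStrongDominating_ncard_eq_sdn {V : Type*} (G : SimpleGraph V) :
    ∃ D, IsStrongDominating G D ∧ D.ncard = sdn G :=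
  Nat.sInf_mem (s := {n | ∃ D : Set V, IsStrongDominating G D ∧ D.ncard = n})
    ⟨_, Set.univ, isStrongDominating_univ G, rfl⟩

lemma sdn_le_ncard {V : Type*} {G : SimpleGraph V} {D : Set V} (hD : IsStrongDominating G D) :
    sdn G ≤ D.ncard :=
  Nat.sInf_le ⟨D, hD, rfl⟩

theorem strongDominating_insert_of_maxDeg_general {V : Type*} (G : SimpleGraph V)
    (v : V) (hv : ∀ u ∈ G.neighborSet v, sdeg G u < sdeg G v)
    (S : Set {x : V // x ≠ v}) (hS : IsStrongDominating (delVtx G v) S) :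
    IsStrongDominating G (Subtype.val '' S ∪ {v}) ∧ sdn G ≤ sdn (delVtx G v) + 1 := by
  refine ⟨hS.image_val_union_singleton_of_delVtx hv, ?_⟩
  obtain ⟨D, hD, hDcard⟩ := exists_isStrongDominating_ncard_eq_sdn (delVtx G v)
  calc sdn G ≤ (Subtype.val '' D ∪ {v}).ncard :=
        sdn_le_ncard (hD.image_val_union_singleton_of_delVtx hv)
    _ ≤ (Subtype.val '' D).ncard + ({v} : Set V).ncard := Set.ncard_union_le _ _
    _ = sdn (delVtx G v) + 1 := by
        rw [Set.ncard_image_of_injective _ Subtype.val_injective, Set.ncard_singleton, hDcard]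

/-- if deg_G(v) > deg_G(u) for every neighbor u of v and S is a strong
dominating set of G − v, then S ∪ {v} is a strong dominating set of G; consequently
γst(G) ≤ γst(G − v) + 1. -/
theorem strongDominating_insert_of_maxDeg {V : Type*} [Fintype V] (G : SimpleGraph V)
    (v : V) (hv : ∀ u ∈ G.neighborSet v, sdeg G u < sdeg G v)
    (S : Set {x : V // x ≠ v}) (hS : IsStrongDominating (delVtx G v) S) :
    IsStrongDominating G (Subtype.val '' S ∪ {v}) ∧ sdn G ≤ sdn (delVtx G v) + 1 :=
  strongDominating_insert_of_maxDeg_general G v hv S hS
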